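/- arXiv:2503.13853 — 3 statements merged into one kernel-verified Lean document; each statement's English description precedes it below -/
import Mathlib

section
/- Let ω₂ be a majorant satisfying the Hardy–Littlewood condition and ψ ∈ 𝓛_{ω₂}(𝕋) with seminorm L. Define Q[ψ](z) = (1/2π)∫₀^{2π} \bar{z}e^{it}ψ(e^{it})(1-|z|²)/(1-\bar{z}e^{it})² dt. Then there is a constant M > 0 such that |Q[ψ](rξ)| ≤ M·L·ω₂(1-r) for all ξ ∈ 𝕋 and r ∈ [0,1). -/
/-!
Since `t ↦ z̄e^{it} / (1 - z̄e^{it})²` is the derivative of the `2π`-periodic function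
`t ↦ -i (1 - z̄e^{it})⁻¹`, its integral vanishes, so `Q` does not see constants:
`Q[ψ](rξ) = Q[φ](r)` with `φ(ζ) = ψ(ξζ) - ψ(ξ)` and `|φ(e^{it})| ≤ L ω₂(|t|)`. For real `r` the
integrand of `Q[φ](r)` has modulus `(1 - r²) |φ(e^{it})| K_r(t)` with `K_r(t) = r / |1 - re^{it}|²`,
and `K_r ≤ (1 - r)⁻²` everywhere while `K_r(t) ≤ π² / (4t²)` by Jordan's inequality. On
`|t| ≤ 1 - r` monotonicity of `ω₂` gives `∫ ω₂(|t|) K_r ≤ 2ω₂(1 - r)/(1 - r)`; on `1 - r ≤ |t| ≤ π`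
the Hardy–Littlewood condition gives `π²M₀ω₂(1 - r)/(2(1 - r))`. The factor `1 - r² ≤ 2(1 - r)`
cancels the `1/(1 - r)`.
-/

open Complex

/-- `Q[ψ](z) = (1/2π)∫₀^{2π} z̄ e^{it} ψ(e^{it}) (1-|z|²)/(1-z̄e^{it})² dt`. -/
noncomputable def Qop (ψ : ℂ → ℂ) (z : ℂ) : ℂ :=
  (1 / (2 * Real.pi)) • ∫ t in (0:ℝ)..(2 * Real.pi),
    (starRingEnd ℂ) z * Complex.exp (t * Complex.I) * ψ (Complex.exp (t * Complex.I)) *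
      ((1 - ‖z‖ ^ 2 : ℝ) : ℂ) /
        (1 - (starRingEnd ℂ) z * Complex.exp (t * Complex.I)) ^ 2

open scoped Real
open Set MeasureTheory intervalIntegral

lemma continuousOn_of_dist_le_mul {X Y : Type*} [PseudoMetricSpace X] [PseudoMetricSpace Y]
    {ω : ℝ → ℝ} (hω : ContinuousWithinAt ω (Ici 0) 0) (h0 : ω 0 = 0) {f : X → Y} {s : Set X}
    {L : ℝ} (hf : ∀ x ∈ s, ∀ y ∈ s, dist (f x) (f y) ≤ L * ω (dist x y)) : ContinuousOn f s := by
  intro x hx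
  rw [ContinuousWithinAt, tendsto_iff_dist_tendsto_zero]
  have hdist : Filter.Tendsto (dist · x) (nhdsWithin x s) (nhdsWithin 0 (Ici 0)) := by
    refine tendsto_nhdsWithin_iff.2 ⟨?_, .of_forall fun _ => dist_nonneg⟩
    exact ((continuous_id.dist continuous_const).tendsto' x 0 (dist_self x)).mono_left
      nhdsWithin_le_nhds
  have hbound : Filter.Tendsto (fun y => L * ω (dist y x)) (nhdsWithin x s) (nhds 0) := by
    simpa [h0] using (hω.tendsto.comp hdist).const_mul L
  exact squeeze_zero' (.of_forall fun _ => dist_nonneg)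
    (eventually_nhdsWithin_of_forall fun y hy => hf y hy x hx) hbound

lemma exp_ofReal_add_two_pi_mul_I (t : ℝ) : exp (↑(t + 2 * π) * I) = exp (t * I) := by
  rw [ofReal_add, add_mul, exp_add, ofReal_mul, ofReal_ofNat, exp_two_pi_mul_I, mul_one]

lemma exp_ofReal_mul_I_eq_mul_exp_sub (t θ : ℝ) :
    exp (t * I) = exp (θ * I) * exp (↑(t - θ) * I) := by
  rw [← exp_add]; push_cast; ring_nf

lemma one_sub_mul_exp_ne_zero {w : ℂ} (hw : ‖w‖ < 1) (t : ℝ) : 1 - w * exp (t * I) ≠ 0 := by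
  intro h
  have := congrArg norm (sub_eq_zero.1 h)
  rw [norm_one, norm_mul, norm_exp_ofReal_mul_I, mul_one] at this
  linarith

lemma norm_one_sub_ofReal_mul_exp_sq (r t : ℝ) :
    ‖1 - r * exp (t * I)‖ ^ 2 = 1 - 2 * r * Real.cos t + r ^ 2 := by
  rw [← normSq_eq_norm_sq, normSq_apply]
  simp only [sub_re, sub_im, one_re, one_im, mul_re, mul_im, ofReal_re, ofReal_im,
    exp_ofReal_mul_I_re, exp_ofReal_mul_I_im]
  nlinarith [Real.sin_sq_add_cos_sq t]

lemma hasDerivAt_neg_I_mul_inv_one_sub_mul_exp {w : ℂ} (hw : ‖w‖ < 1) (t : ℝ) :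
    HasDerivAt (fun t : ℝ => -I * (1 - w * exp (t * I))⁻¹)
      (w * exp (t * I) / (1 - w * exp (t * I)) ^ 2) t := by
  have hexp : HasDerivAt (fun t : ℝ => exp (t * I)) (exp (t * I) * I) t :=
    ((hasDerivAt_id t).ofReal_comp.mul_const I).cexp.congr_deriv (by simp)
  refine ((((hexp.const_mul w).const_sub 1).fun_inv
    (one_sub_mul_exp_ne_zero hw t)).const_mul (-I)).congr_deriv ?_
  linear_combination -(w * exp (t * I) / (1 - w * exp (t * I)) ^ 2) * I_sq

lemma integral_mul_exp_div_one_sub_sq_eq_zero {w : ℂ} (hw : ‖w‖ < 1) :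
    ∫ t in (0 : ℝ)..2 * π, w * exp (t * I) / (1 - w * exp (t * I)) ^ 2 = 0 := by
  have hcont : Continuous fun t : ℝ => w * exp (t * I) / (1 - w * exp (t * I)) ^ 2 :=
    Continuous.div (by fun_prop) (by fun_prop) fun t => pow_ne_zero 2 (one_sub_mul_exp_ne_zero hw t)
  rw [integral_eq_sub_of_hasDerivAt (fun t _ => hasDerivAt_neg_I_mul_inv_one_sub_mul_exp hw t)
    (hcont.intervalIntegrable _ _), ← zero_add (2 * π), exp_ofReal_add_two_pi_mul_I, sub_self]

noncomputable def qopIntegrand (ψ : ℂ → ℂ) (z : ℂ) (t : ℝ) : ℂ :=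
  (starRingEnd ℂ) z * exp (t * I) * ψ (exp (t * I)) * ((1 - ‖z‖ ^ 2 : ℝ) : ℂ) /
    (1 - (starRingEnd ℂ) z * exp (t * I)) ^ 2

lemma Qop_eq_integral_qopIntegrand (ψ : ℂ → ℂ) (z : ℂ) :
    Qop ψ z = (1 / (2 * π)) • ∫ t in (0 : ℝ)..2 * π, qopIntegrand ψ z t := rfl

lemma periodic_qopIntegrand (ψ : ℂ → ℂ) (z : ℂ) :
    Function.Periodic (qopIntegrand ψ z) (2 * π) := by
  intro t
  simp only [qopIntegrand, exp_ofReal_add_two_pi_mul_I]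

lemma Qop_eq_integral_neg_pi_pi (ψ : ℂ → ℂ) (z : ℂ) :
    Qop ψ z = (1 / (2 * π)) • ∫ t in -π..π, qopIntegrand ψ z t := by
  rw [Qop_eq_integral_qopIntegrand, ← zero_add (2 * π),
    (periodic_qopIntegrand ψ z).intervalIntegral_add_eq 0 (-π)]
  ring_nf

lemma qopIntegrand_mul_exp (ψ : ℂ → ℂ) (z : ℂ) (θ t : ℝ) :
    qopIntegrand ψ (z * exp (θ * I)) t =
      qopIntegrand (fun ζ => ψ (exp (θ * I) * ζ)) z (t - θ) := by
  have hrot : ∀ c : ℂ,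
      c * (starRingEnd ℂ) (exp (θ * I)) * exp (t * I) = c * exp (↑(t - θ) * I) := by
    intro c
    rw [mul_assoc, ← exp_conj, ← exp_add, map_mul, conj_ofReal, conj_I]
    push_cast; ring_nf
  simp only [qopIntegrand, norm_mul, norm_exp_ofReal_mul_I, mul_one, map_mul, hrot]
  rw [exp_ofReal_mul_I_eq_mul_exp_sub t θ]

lemma Qop_mul_exp (ψ : ℂ → ℂ) (z : ℂ) (θ : ℝ) :
    Qop ψ (z * exp (θ * I)) = Qop (fun ζ => ψ (exp (θ * I) * ζ)) z := by
  simp only [Qop_eq_integral_qopIntegrand, qopIntegrand_mul_exp]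
  rw [integral_comp_sub_right (qopIntegrand _ z), zero_sub, ← neg_add_eq_sub,
    (periodic_qopIntegrand _ z).intervalIntegral_add_eq (-θ) 0, zero_add]

lemma Qop_sub_const {ψ : ℂ → ℂ} {z : ℂ} (hz : ‖z‖ < 1)
    (hψ : IntervalIntegrable (fun t : ℝ => ψ (exp (t * I))) volume 0 (2 * π)) (c : ℂ) :
    Qop (fun ζ => ψ ζ - c) z = Qop ψ z := by
  set w := (starRingEnd ℂ) z
  have hw : ‖w‖ < 1 := by rwa [norm_conj]
  have hden : ∀ t : ℝ, (1 - w * exp (t * I)) ^ 2 ≠ 0 :=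
    fun t => pow_ne_zero 2 (one_sub_mul_exp_ne_zero hw t)
  have hkernel : Continuous fun t : ℝ => w * exp (t * I) / (1 - w * exp (t * I)) ^ 2 :=
    Continuous.div (by fun_prop) (by fun_prop) hden
  have hint : IntervalIntegrable (qopIntegrand ψ z) volume 0 (2 * π) := by
    have hcoef : Continuous fun t : ℝ =>
        w * exp (t * I) * ((1 - ‖z‖ ^ 2 : ℝ) : ℂ) / (1 - w * exp (t * I)) ^ 2 :=
      Continuous.div (by fun_prop) (by fun_prop) hden
    refine (hψ.mul_continuousOn hcoef.continuousOn).congr fun t _ => ?_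
    simp only [qopIntegrand]; ring
  have hsplit : ∀ t, qopIntegrand (fun ζ => ψ ζ - c) z t = qopIntegrand ψ z t -
      c * ((1 - ‖z‖ ^ 2 : ℝ) : ℂ) * (w * exp (t * I) / (1 - w * exp (t * I)) ^ 2) := by
    intro t; simp only [qopIntegrand]; ring
  simp only [Qop_eq_integral_qopIntegrand, hsplit]
  rw [integral_sub hint ((hkernel.intervalIntegrable _ _).const_mul _),
    intervalIntegral.integral_const_mul,
    integral_mul_exp_div_one_sub_sq_eq_zero hw, mul_zero, sub_zero]

noncomputable def qopKernel (r t : ℝ) : ℝ := r / (1 - 2 * r * Real.cos t + r ^ 2)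

lemma sq_one_sub_le_qopKernel_denom {r : ℝ} (hr0 : 0 ≤ r) (t : ℝ) :
    (1 - r) ^ 2 ≤ 1 - 2 * r * Real.cos t + r ^ 2 := by
  nlinarith [mul_nonneg hr0 (sub_nonneg.2 (Real.cos_le_one t))]

lemma qopKernel_denom_pos {r : ℝ} (hr0 : 0 ≤ r) (hr1 : r < 1) (t : ℝ) :
    0 < 1 - 2 * r * Real.cos t + r ^ 2 :=
  (pow_pos (sub_pos.2 hr1) 2).trans_le (sq_one_sub_le_qopKernel_denom hr0 t)

lemma qopKernel_nonneg {r : ℝ} (hr0 : 0 ≤ r) (hr1 : r < 1) (t : ℝ) : 0 ≤ qopKernel r t :=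
  div_nonneg hr0 (qopKernel_denom_pos hr0 hr1 t).le

lemma continuous_qopKernel {r : ℝ} (hr0 : 0 ≤ r) (hr1 : r < 1) : Continuous (qopKernel r) :=
  continuous_const.div (by fun_prop) fun t => (qopKernel_denom_pos hr0 hr1 t).ne'

lemma qopKernel_le_inv_sq {r : ℝ} (hr0 : 0 ≤ r) (hr1 : r < 1) (t : ℝ) :
    qopKernel r t ≤ 1 / (1 - r) ^ 2 :=
  div_le_div₀ zero_le_one hr1.le (pow_pos (sub_pos.2 hr1) 2)
    (sq_one_sub_le_qopKernel_denom hr0 t)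

lemma qopKernel_le_pi_sq_div {r t : ℝ} (hr0 : 0 ≤ r) (ht : |t| ≤ π) (ht0 : t ≠ 0) :
    qopKernel r t ≤ π ^ 2 / (4 * t ^ 2) := by
  rcases hr0.eq_or_lt with rfl | hr
  · simp only [qopKernel, zero_div]; positivity
  have hcos := Real.cos_le_one_sub_mul_cos_sq ht
  have hlow : 4 * r * t ^ 2 / π ^ 2 ≤ 1 - 2 * r * Real.cos t + r ^ 2 := by
    have : 2 / π ^ 2 * t ^ 2 ≤ 1 - Real.cos t := by linarith
    calc 4 * r * t ^ 2 / π ^ 2 = 2 * r * (2 / π ^ 2 * t ^ 2) := by ring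
      _ ≤ 2 * r * (1 - Real.cos t) := by gcongr
      _ ≤ _ := by nlinarith [sq_nonneg (1 - r)]
  calc qopKernel r t ≤ r / (4 * r * t ^ 2 / π ^ 2) :=
        div_le_div_of_nonneg_left hr0 (by positivity) hlow
    _ = π ^ 2 / (4 * t ^ 2) := by field_simp

lemma norm_qopIntegrand_ofReal (φ : ℂ → ℂ) {r : ℝ} (hr0 : 0 ≤ r) (hr1 : r < 1) (t : ℝ) :
    ‖qopIntegrand φ r t‖ =
      (1 - r ^ 2) * (‖φ (exp (t * I))‖ * qopKernel r t) := by
  have hr2 : 0 ≤ 1 - r ^ 2 := by nlinarith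
  rw [qopIntegrand, qopKernel, conj_ofReal, norm_div, norm_pow, norm_one_sub_ofReal_mul_exp_sq,
    norm_mul, norm_mul, norm_mul, norm_exp_ofReal_mul_I, norm_real, Real.norm_of_nonneg hr0,
    norm_real, Real.norm_of_nonneg hr2]
  ring

lemma norm_Qop_ofReal_le {φ : ℂ → ℂ} {g : ℝ → ℝ} {r : ℝ} (hr0 : 0 ≤ r) (hr1 : r < 1)
    (hg : IntervalIntegrable g volume (-π) π)
    (hφg : ∀ t ∈ Icc (-π) π, ‖φ (exp (t * I))‖ ≤ g t) :
    ‖Qop φ r‖ ≤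
      (1 - r ^ 2) / (2 * π) * ∫ t in -π..π, g t * qopKernel r t := by
  have hbound : ‖∫ t in -π..π, qopIntegrand φ r t‖ ≤
      ∫ t in -π..π, (1 - r ^ 2) * (g t * qopKernel r t) := by
    refine norm_integral_le_of_norm_le (by linarith [Real.pi_pos]) (ae_of_all _ fun t ht => ?_)
      ((hg.mul_continuousOn (continuous_qopKernel hr0 hr1).continuousOn).const_mul _)
    rw [norm_qopIntegrand_ofReal φ hr0 hr1]
    gcongr
    · nlinarith
    · exact qopKernel_nonneg hr0 hr1 t
    · exact hφg t (Ioc_subset_Icc_self ht)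
  rw [intervalIntegral.integral_const_mul] at hbound
  rw [Qop_eq_integral_neg_pi_pi, norm_smul, Real.norm_of_nonneg (by positivity)]
  calc _ ≤ 1 / (2 * π) * ((1 - r ^ 2) *
          ∫ t in -π..π, g t * qopKernel r t) := by gcongr
    _ = _ := by ring

lemma integral_neg_self_eq_two_mul_of_even {f : ℝ → ℝ} {a : ℝ} (hf : ∀ x, f (-x) = f x)
    (hint : IntervalIntegrable f volume 0 a) :
    ∫ x in -a..a, f x = 2 * ∫ x in 0..a, f x := by
  have hint' : IntervalIntegrable f volume (-a) 0 := by
    simpa [hf] using ((IntervalIntegrable.iff_comp_neg (f := f)).1 hint).symm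
  have hleft : ∫ x in -a..0, f x = ∫ x in 0..a, f x := by
    simpa [hf] using (integral_comp_neg (a := 0) (b := a) f).symm
  rw [← integral_add_adjacent_intervals hint' hint, hleft, two_mul]

lemma intervalIntegrable_mul_qopKernel {ω : ℝ → ℝ} (hcont : ContinuousOn ω (Ici 0)) {r : ℝ}
    (hr0 : 0 ≤ r) (hr1 : r < 1) {a b : ℝ} (ha : 0 ≤ a) (hb : 0 ≤ b) :
    IntervalIntegrable (fun s => ω s * qopKernel r s) volume a b :=
  ((hcont.mono fun _ hs => le_trans (le_min ha hb) hs.1).mul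
    (continuous_qopKernel hr0 hr1).continuousOn).intervalIntegrable

lemma integral_mul_qopKernel_near_le {ω : ℝ → ℝ} (hcont : ContinuousOn ω (Ici 0))
    (hmono : MonotoneOn ω (Ici 0)) (h0 : ω 0 = 0) {r : ℝ} (hr0 : 0 ≤ r) (hr1 : r < 1) :
    ∫ s in (0 : ℝ)..1 - r, ω s * qopKernel r s ≤ ω (1 - r) / (1 - r) := by
  have hδ : 0 < 1 - r := sub_pos.2 hr1
  have hωδ : 0 ≤ ω (1 - r) := h0 ▸ hmono self_mem_Ici hδ.le hδ.le
  calc ∫ s in (0 : ℝ)..1 - r, ω s * qopKernel r s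
      ≤ ∫ _ in (0 : ℝ)..1 - r, ω (1 - r) * (1 / (1 - r) ^ 2) := by
        refine integral_mono_on hδ.le
          (intervalIntegrable_mul_qopKernel hcont hr0 hr1 le_rfl hδ.le) intervalIntegrable_const
          fun s hs => ?_
        exact mul_le_mul (hmono hs.1 hδ.le hs.2) (qopKernel_le_inv_sq hr0 hr1 s)
          (qopKernel_nonneg hr0 hr1 s) hωδ
    _ = ω (1 - r) / (1 - r) := by
        rw [intervalIntegral.integral_const, smul_eq_mul, sub_zero]; field_simp

lemma integral_mul_qopKernel_far_le {ω : ℝ → ℝ} (hcont : ContinuousOn ω (Ici 0))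
    (hmono : MonotoneOn ω (Ici 0)) (h0 : ω 0 = 0) {M₀ r : ℝ} (hr0 : 0 ≤ r) (hr1 : r < 1)
    (hHL : (1 - r) * ∫ t in (1 - r)..π, ω t / t ^ 2 ≤ M₀ * ω (1 - r)) :
    ∫ s in (1 - r)..π, ω s * qopKernel r s ≤ π ^ 2 / 4 * (M₀ * ω (1 - r) / (1 - r)) := by
  have hδ : 0 < 1 - r := sub_pos.2 hr1
  have hδπ : 1 - r ≤ π := by linarith [Real.pi_gt_three]
  have hcont' : ContinuousOn (fun s => ω s / s ^ 2) (Icc (1 - r) π) :=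
    (hcont.mono fun _ hs => hδ.le.trans hs.1).div (by fun_prop)
      fun s hs => (pow_pos (hδ.trans_le hs.1) 2).ne'
  calc ∫ s in (1 - r)..π, ω s * qopKernel r s
      ≤ ∫ s in (1 - r)..π, π ^ 2 / 4 * (ω s / s ^ 2) := by
        refine integral_mono_on hδπ
          (intervalIntegrable_mul_qopKernel hcont hr0 hr1 hδ.le Real.pi_pos.le)
          ((hcont'.intervalIntegrable_of_Icc hδπ).const_mul _) fun s hs => ?_
        have hs0 : 0 < s := hδ.trans_le hs.1
        have hωs : 0 ≤ ω s := h0 ▸ hmono self_mem_Ici hs0.le hs0.le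
        calc ω s * qopKernel r s ≤ ω s * (π ^ 2 / (4 * s ^ 2)) := by
              gcongr
              exact qopKernel_le_pi_sq_div hr0 (by rw [abs_of_pos hs0]; exact hs.2) hs0.ne'
          _ = π ^ 2 / 4 * (ω s / s ^ 2) := by ring
    _ = π ^ 2 / 4 * ∫ s in (1 - r)..π, ω s / s ^ 2 := intervalIntegral.integral_const_mul _ _
    _ ≤ π ^ 2 / 4 * (M₀ * ω (1 - r) / (1 - r)) := by
        gcongr
        rw [le_div_iff₀ hδ]
        linarith

lemma integral_abs_mul_qopKernel_le {ω : ℝ → ℝ} (hcont : ContinuousOn ω (Ici 0))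
    (hmono : MonotoneOn ω (Ici 0)) (h0 : ω 0 = 0) {M₀ r : ℝ} (hr0 : 0 ≤ r) (hr1 : r < 1)
    (hHL : (1 - r) * ∫ t in (1 - r)..π, ω t / t ^ 2 ≤ M₀ * ω (1 - r)) :
    ∫ t in -π..π, ω |t| * qopKernel r t ≤ 2 * (1 + π ^ 2 * M₀ / 4) * (ω (1 - r) / (1 - r)) := by
  have hδ : 0 < 1 - r := sub_pos.2 hr1
  have hint : ∀ {a b : ℝ}, 0 ≤ a → 0 ≤ b →
      IntervalIntegrable (fun s => ω s * qopKernel r s) volume a b :=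
    intervalIntegrable_mul_qopKernel hcont hr0 hr1
  have heven :
      ∫ t in -π..π, ω |t| * qopKernel r t = 2 * ∫ t in (0 : ℝ)..π, ω t * qopKernel r t := by
    rw [integral_neg_self_eq_two_mul_of_even (f := fun t => ω |t| * qopKernel r t)
      (fun t => by simp only [abs_neg, qopKernel, Real.cos_neg])
      (((hcont.comp_continuous continuous_abs abs_nonneg).mul
        (continuous_qopKernel hr0 hr1)).intervalIntegrable _ _)]
    congr 1
    refine integral_congr fun t ht => ?_
    rw [uIcc_of_le Real.pi_pos.le] at ht
    simp only [abs_of_nonneg ht.1]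
  have hnear := integral_mul_qopKernel_near_le hcont hmono h0 hr0 hr1
  have hfar := integral_mul_qopKernel_far_le hcont hmono h0 hr0 hr1 hHL
  rw [heven, ← integral_add_adjacent_intervals (hint le_rfl hδ.le)
    (hint hδ.le Real.pi_pos.le)]
  calc 2 * ((∫ s in (0 : ℝ)..1 - r, ω s * qopKernel r s) + ∫ s in (1 - r)..π, ω s * qopKernel r s)
      ≤ 2 * (ω (1 - r) / (1 - r) + π ^ 2 / 4 * (M₀ * ω (1 - r) / (1 - r))) := by gcongr
    _ = 2 * (1 + π ^ 2 * M₀ / 4) * (ω (1 - r) / (1 - r)) := by ring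

lemma norm_Qop_ofReal_le_of_modulus {ω : ℝ → ℝ} (hcont : ContinuousOn ω (Ici 0))
    (hmono : MonotoneOn ω (Ici 0)) (h0 : ω 0 = 0) {M₀ : ℝ} (hM₀ : 0 ≤ M₀) {φ : ℂ → ℂ} {L r : ℝ}
    (hL : 0 ≤ L) (hr0 : 0 ≤ r) (hr1 : r < 1)
    (hHL : (1 - r) * ∫ t in (1 - r)..π, ω t / t ^ 2 ≤ M₀ * ω (1 - r))
    (hφ : ∀ t ∈ Icc (-π) π, ‖φ (exp (t * I))‖ ≤ L * ω |t|) :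
    ‖Qop φ r‖ ≤ 2 / π * (1 + π ^ 2 * M₀ / 4) * L * ω (1 - r) := by
  have hδ : 1 - r ≠ 0 := (sub_pos.2 hr1).ne'
  have hωδ : 0 ≤ ω (1 - r) := h0 ▸ hmono self_mem_Ici (sub_nonneg.2 hr1.le) (sub_nonneg.2 hr1.le)
  have hωint : IntervalIntegrable (fun t => L * ω |t|) volume (-π) π :=
    ((hcont.comp_continuous continuous_abs abs_nonneg).const_mul L).intervalIntegrable _ _
  calc ‖Qop φ r‖
      ≤ (1 - r ^ 2) / (2 * π) * ∫ t in -π..π, L * ω |t| * qopKernel r t :=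
        norm_Qop_ofReal_le hr0 hr1 hωint hφ
    _ = (1 - r ^ 2) / (2 * π) * L * ∫ t in -π..π, ω |t| * qopKernel r t := by
        simp_rw [mul_assoc L, intervalIntegral.integral_const_mul]; ring
    _ ≤ (1 - r ^ 2) / (2 * π) * L * (2 * (1 + π ^ 2 * M₀ / 4) * (ω (1 - r) / (1 - r))) :=
        mul_le_mul_of_nonneg_left (integral_abs_mul_qopKernel_le hcont hmono h0 hr0 hr1 hHL)
          (mul_nonneg (div_nonneg (by nlinarith) (by positivity)) hL)
    _ = (1 + r) / 2 * (2 / π * (1 + π ^ 2 * M₀ / 4) * L * ω (1 - r)) := by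
        field_simp; ring
    _ ≤ 2 / π * (1 + π ^ 2 * M₀ / 4) * L * ω (1 - r) :=
        mul_le_of_le_one_left (by positivity) (by linarith)

theorem Qop_abs_bound_general (ω₂ : ℝ → ℝ)
    (hcont : ContinuousOn ω₂ (Set.Ici 0))
    (hmono : MonotoneOn ω₂ (Set.Ici 0))
    (h0 : ω₂ 0 = 0)
    (M₀ : ℝ) (hM₀ : 0 < M₀)
    (hHL : ∀ lam : ℝ, lam ∈ Set.Ioc 0 Real.pi →
      lam * ∫ t in lam..Real.pi, ω₂ t / t ^ 2 ≤ M₀ * ω₂ lam)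
    (ψ : ℂ → ℂ) (L : ℝ) (hL : 0 ≤ L)
    (hψ : ∀ ξ ζ : ℂ, ‖ξ‖ = 1 → ‖ζ‖ = 1 →
      ‖ψ ξ - ψ ζ‖ ≤ L * ω₂ ‖ξ - ζ‖)
    :
    ∃ M : ℝ, 0 < M ∧ ∀ (ξ : ℂ), ‖ξ‖ = 1 → ∀ r : ℝ, 0 ≤ r → r < 1 →
      ‖Qop ψ ((r : ℂ) * ξ)‖ ≤ M * L * ω₂ (1 - r) := by
  refine ⟨2 / π * (1 + π ^ 2 * M₀ / 4), by positivity, fun ξ hξ r hr0 hr1 => ?_⟩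
  obtain ⟨θ, rfl⟩ : ∃ θ : ℝ, exp (θ * I) = ξ :=
    ⟨ξ.arg, by simpa [hξ] using norm_mul_exp_arg_mul_I ξ⟩
  have hψc : ContinuousOn ψ (Metric.sphere 0 1) :=
    continuousOn_of_dist_le_mul (hcont 0 self_mem_Ici) h0 fun x hx y hy => by
      simpa [dist_eq_norm] using hψ x y (by simpa using hx) (by simpa using hy)
  have hint : IntervalIntegrable (fun t : ℝ => ψ (exp (θ * I) * exp (t * I))) volume 0 (2 * π) :=
    (hψc.comp_continuous (by fun_prop) fun t => by simp).intervalIntegrable _ _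
  rw [Qop_mul_exp, ← Qop_sub_const (by simpa [abs_of_nonneg hr0] using hr1) hint (ψ (exp (θ * I)))]
  refine norm_Qop_ofReal_le_of_modulus hcont hmono h0 hM₀.le hL hr0 hr1
    (hHL _ ⟨sub_pos.2 hr1, by linarith [Real.pi_gt_three]⟩) fun t _ => ?_
  calc ‖ψ (exp (θ * I) * exp (t * I)) - ψ (exp (θ * I))‖
      ≤ L * ω₂ ‖exp (θ * I) * exp (t * I) - exp (θ * I)‖ := hψ _ _ (by simp) (by simp)
    _ = L * ω₂ ‖exp (t * I) - 1‖ := by rw [← mul_sub_one, norm_mul, norm_exp_ofReal_mul_I, one_mul]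
    _ ≤ L * ω₂ |t| := by
        gcongr
        exact hmono (norm_nonneg _) (abs_nonneg t)
          (by simpa [mul_comm] using Real.norm_exp_I_mul_ofReal_sub_one_le (x := t))

/-- Lemma 2.2: `|Q[ψ](rξ)| ≤ M L ω₂(1-r)` for all `ξ ∈ 𝕋`, `r ∈ [0,1)`. -/
theorem Qop_abs_bound (ω₂ : ℝ → ℝ)
    (hcont : ContinuousOn ω₂ (Set.Ici 0))
    (hmono : MonotoneOn ω₂ (Set.Ici 0))
    (hnonneg : ∀ t, 0 ≤ t → 0 ≤ ω₂ t)
    (h0 : ω₂ 0 = 0)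
    (hanti : AntitoneOn (fun t => ω₂ t / t) (Set.Ioi 0))
    (M₀ : ℝ) (hM₀ : 0 < M₀)
    (hHL : ∀ lam : ℝ, lam ∈ Set.Ioc 0 Real.pi →
      lam * ∫ t in lam..Real.pi, ω₂ t / t ^ 2 ≤ M₀ * ω₂ lam)
    (ψ : ℂ → ℂ) (L : ℝ) (hL : 0 ≤ L)
    (hψ : ∀ ξ ζ : ℂ, ‖ξ‖ = 1 → ‖ζ‖ = 1 →
      ‖ψ ξ - ψ ζ‖ ≤ L * ω₂ ‖ξ - ζ‖)
    :
    ∃ M : ℝ, 0 < M ∧ ∀ (ξ : ℂ), ‖ξ‖ = 1 → ∀ r : ℝ, 0 ≤ r → r < 1 →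
      ‖Qop ψ ((r : ℂ) * ξ)‖ ≤ M * L * ω₂ (1 - r) :=
  Qop_abs_bound_general ω₂ hcont hmono h0 M₀ hM₀ hHL ψ L hL hψ
end

section
/- Let ψ: 𝕋 → ℂ be continuous and Q[ψ](z) = (1/2π)∫₀^{2π} \bar{z}e^{it}ψ(e^{it})(1-|z|²)/(1-\bar{z}e^{it})² dt. Then for z = re^{iθ} ∈ 𝔻, ∂_z Q[ψ](z) = -(1/2π)∫₀^{2π} (ψ(e^{it}) - ψ(e^{iθ})) \bar{z}² e^{it}/(1-\bar{z}e^{it})² dt. -/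
open Complex

/-- The Wirtinger derivative `∂_z f = (∂_x f - i ∂_y f)/2`. -/
noncomputable def wdz (f : ℂ → ℂ) (z : ℂ) : ℂ :=
  (fderiv ℝ f z 1 - Complex.I * fderiv ℝ f z Complex.I) / 2

/-- The Wirtinger derivative `∂_z̄ f = (∂_x f + i ∂_y f)/2`. -/
noncomputable def wdzbar (f : ℂ → ℂ) (z : ℂ) : ℂ :=
  (fderiv ℝ f z 1 + Complex.I * fderiv ℝ f z Complex.I) / 2

/-!
Write `P ψ w = (1/2π) ∫ ζ ψ(ζ) / (1 - w ζ)² |dζ|` over the unit circle. Then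
`Q[ψ](z) = (1 - z z̄) · z̄ P ψ (z̄)`, and `P ψ` is holomorphic in the disc: it is half the
`w`-derivative of the Herglotz–Riesz integral of `ζ ↦ ψ(1/ζ)`. So `z ↦ z̄ P ψ (z̄)` is
antiholomorphic and the Leibniz rule for `∂_z` gives `∂_z Q[ψ](z) = -z̄² P ψ (z̄)`. Finally
`P` kills constants by the mean value property (the kernel is holomorphic in `ζ` on the closed
disc), so `ψ` may be replaced by `ψ - ψ(e^{iθ})`.
-/

open ComplexConjugate Metric

section Wirtinger

variable {f g : ℂ → ℂ} {z : ℂ}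

theorem wdz_mul (hf : DifferentiableAt ℝ f z) (hg : DifferentiableAt ℝ g z) :
    wdz (fun z => f z * g z) z = wdz f z * g z + f z * wdz g z := by
  rw [wdz, wdz, wdz, (hf.hasFDerivAt.fun_mul hg.hasFDerivAt).fderiv]
  simp only [add_apply, smul_apply, smul_eq_mul]
  ring

theorem wdz_comp_conj (hg : DifferentiableAt ℂ g (conj z)) :
    wdz (fun z => g (conj z)) z = 0 := by
  have h := (hg.hasFDerivAt.restrictScalars ℝ).comp z conjCLE.hasFDerivAt
  rw [Function.comp_def] at h
  have h1 : fderiv ℝ (fun z => g (conj z)) z 1 = deriv g (conj z) := by simp [h.fderiv]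
  have hI : fderiv ℝ (fun z => g (conj z)) z I = -I * deriv g (conj z) := by simp [h.fderiv]
  rw [wdz, h1, hI]
  linear_combination deriv g (conj z) / 2 * I_sq

theorem wdz_one_sub_mul_conj : wdz (fun z => 1 - z * conj z) z = -conj z := by
  have h : HasFDerivAt (fun z : ℂ => 1 - z * conj z)
      (-(z • conjCLE.toContinuousLinearMap + conj z • ContinuousLinearMap.id ℝ ℂ)) z :=
    ((hasFDerivAt_id z).mul conjCLE.hasFDerivAt).const_sub 1
  have h1 : fderiv ℝ (fun z => 1 - z * conj z) z 1 = -(z + conj z) := by simp [h.fderiv]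
  have hI : fderiv ℝ (fun z => 1 - z * conj z) z I = z * I - conj z * I := by
    rw [h.fderiv]
    simp [sub_eq_neg_add]
  rw [wdz, h1, hI]
  linear_combination (conj z - z) / 2 * I_sq

end Wirtinger

theorem one_sub_mul_ne_zero_of_norm_lt_one {w ζ : ℂ} (hw : ‖w‖ < 1) (hζ : ‖ζ‖ ≤ 1) :
    1 - w * ζ ≠ 0 := by
  intro h
  have hwζ : ‖w * ζ‖ < 1 := by
    rw [norm_mul]
    exact lt_of_le_of_lt (mul_le_of_le_one_right (norm_nonneg w) hζ) hw
  rw [← sub_eq_zero.1 h, norm_one] at hwζ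
  exact lt_irrefl 1 hwζ

theorem circleAverage_zero_one_eq_intervalIntegral (F : ℂ → ℂ) :
    Real.circleAverage F 0 1
      = (1 / (2 * Real.pi)) • ∫ t in (0:ℝ)..(2 * Real.pi), F (Complex.exp (t * I)) := by
  simp [Real.circleAverage_def, circleMap]

/-- The `P` above; its kernel `ζ / (1 - w ζ)²` is `∂_w` of the Cauchy–Szegő kernel
`1 / (1 - w ζ)`. -/
noncomputable def cauchyKernelDerivAverage (f : ℂ → ℂ) (w : ℂ) : ℂ :=
  Real.circleAverage (fun ζ => ζ / (1 - w * ζ) ^ 2 * f ζ) 0 1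

theorem inv_div_inv_sub_sq (w ζ : ℂ) : ζ⁻¹ / (ζ⁻¹ - w) ^ 2 = ζ / (1 - w * ζ) ^ 2 := by
  rcases eq_or_ne ζ 0 with rfl | hζ
  · simp
  rw [show ζ⁻¹ - w = (1 - w * ζ) / ζ by field_simp, div_pow, div_div_eq_mul_div]
  field_simp

theorem circleAverage_herglotzRieszKernel_deriv_inv (f : ℂ → ℂ) (w : ℂ) :
    Real.circleAverage (fun ζ => (2 * ζ / (ζ - w) ^ 2) • f ζ⁻¹) 0 1
      = 2 * cauchyKernelDerivAverage f w := by
  rw [← Real.circleAverage_zero_one_congr_inv, cauchyKernelDerivAverage, ← smul_eq_mul,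
    ← Real.circleAverage_smul]
  congr 1
  ext ζ
  simp only [inv_inv, smul_eq_mul, Pi.smul_apply, mul_div_assoc, inv_div_inv_sub_sq]
  ring

theorem differentiableOn_cauchyKernelDerivAverage {f : ℂ → ℂ}
    (hf : ContinuousOn f (sphere 0 1)) :
    DifferentiableOn ℂ (cauchyKernelDerivAverage f) (ball 0 1) := by
  set G := fun w => Real.circleAverage (fun ζ => herglotzRieszKernel 0 w ζ • f ζ⁻¹) 0 1
  have hinv : CircleIntegrable (fun ζ => f ζ⁻¹) 0 1 := by
    refine ContinuousOn.circleIntegrable zero_le_one (hf.comp (continuousOn_inv₀.mono ?_) ?_)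
    · intro ζ hζ hζ0
      rw [Set.mem_singleton_iff.1 hζ0] at hζ
      simp at hζ
    · intro ζ hζ
      simpa using hζ
  have hG : AnalyticOnNhd ℂ G (ball 0 1) :=
    analyticOnNhd_circleAverage_herglotzRieszKernel_smul hinv
  refine (hG.deriv.differentiableOn.div_const 2).congr fun w hw => ?_
  rw [(hasDerivAt_circleAverage_herglotzRieszKernel_smul hinv hw).deriv,
    circleAverage_herglotzRieszKernel_deriv_inv]
  ring

theorem cauchyKernelDerivAverage_const {w : ℂ} (hw : ‖w‖ < 1) (c : ℂ) :
    cauchyKernelDerivAverage (fun _ => c) w = 0 := by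
  have hdiff :
      DifferentiableOn ℂ (fun ζ => ζ / (1 - w * ζ) ^ 2 * c) (closure (ball 0 |1|)) := by
    rw [abs_one, closure_ball 0 one_ne_zero]
    intro ζ hζ
    have hne := one_sub_mul_ne_zero_of_norm_lt_one hw (mem_closedBall_zero_iff.1 hζ)
    fun_prop (disch := exact pow_ne_zero 2 hne)
  simpa [cauchyKernelDerivAverage] using hdiff.diffContOnCl.circleAverage

theorem cauchyKernelDerivAverage_sub_const {f : ℂ → ℂ} (hf : ContinuousOn f (sphere 0 1))
    {w : ℂ} (hw : ‖w‖ < 1) (c : ℂ) :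
    cauchyKernelDerivAverage (fun ζ => f ζ - c) w = cauchyKernelDerivAverage f w := by
  have hk : ContinuousOn (fun ζ : ℂ => ζ / (1 - w * ζ) ^ 2) (sphere 0 1) := by
    refine continuousOn_id.div (by fun_prop) fun ζ hζ => pow_ne_zero 2 ?_
    exact one_sub_mul_ne_zero_of_norm_lt_one hw (by simp_all)
  have hconst := cauchyKernelDerivAverage_const hw c
  simp only [cauchyKernelDerivAverage, mul_sub] at hconst ⊢
  have hfk : CircleIntegrable (fun ζ => ζ / (1 - w * ζ) ^ 2 * f ζ) 0 1 :=
    (hk.mul hf).circleIntegrable zero_le_one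
  have hck : CircleIntegrable (fun ζ => ζ / (1 - w * ζ) ^ 2 * c) 0 1 :=
    (hk.mul continuousOn_const).circleIntegrable zero_le_one
  rw [Real.circleAverage_fun_sub hfk hck, hconst, sub_zero]

theorem Qop_eq_mul_cauchyKernelDerivAverage (ψ : ℂ → ℂ) (z : ℂ) :
    Qop ψ z = (1 - z * conj z) * (conj z * cauchyKernelDerivAverage ψ (conj z)) := by
  have hnorm : ((1 - ‖z‖ ^ 2 : ℝ) : ℂ) = 1 - z * conj z := by
    rw [mul_conj, normSq_eq_norm_sq]
    push_cast
    ring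
  rw [Qop, cauchyKernelDerivAverage, circleAverage_zero_one_eq_intervalIntegral, mul_smul_comm,
    mul_smul_comm, ← intervalIntegral.integral_const_mul, ← intervalIntegral.integral_const_mul]
  congr 1
  refine intervalIntegral.integral_congr fun t _ => ?_
  simp only [hnorm]
  ring

theorem sq_mul_cauchyKernelDerivAverage (f : ℂ → ℂ) (w : ℂ) :
    w ^ 2 * cauchyKernelDerivAverage f w
      = (1 / (2 * Real.pi)) • ∫ t in (0:ℝ)..(2 * Real.pi),
          f (Complex.exp (t * I)) * w ^ 2 * Complex.exp (t * I)
            / (1 - w * Complex.exp (t * I)) ^ 2 := by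
  rw [cauchyKernelDerivAverage, circleAverage_zero_one_eq_intervalIntegral, mul_smul_comm,
    ← intervalIntegral.integral_const_mul]
  congr 1
  refine intervalIntegral.integral_congr fun t _ => ?_
  ring

/-- For continuous `ψ` on the circle and `z = re^{iθ} ∈ 𝔻`:
`∂_z Q[ψ](z) = -(1/2π)∫₀^{2π} (ψ(e^{it}) - ψ(e^{iθ})) z̄² e^{it}/(1-z̄e^{it})² dt`. -/
theorem wdz_Qop_formula (ψ : ℂ → ℂ) (hψ : Continuous ψ) (r θ : ℝ) (hr0 : 0 ≤ r) (hr1 : r < 1) :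
    wdz (Qop ψ) ((r : ℂ) * Complex.exp (θ * Complex.I))
      = -((1 / (2 * Real.pi)) • ∫ t in (0:ℝ)..(2 * Real.pi),
          (ψ (Complex.exp (t * Complex.I)) - ψ (Complex.exp (θ * Complex.I))) *
            ((starRingEnd ℂ) ((r : ℂ) * Complex.exp (θ * Complex.I))) ^ 2 *
              Complex.exp (t * Complex.I) /
                (1 - (starRingEnd ℂ) ((r : ℂ) * Complex.exp (θ * Complex.I)) *
                  Complex.exp (t * Complex.I)) ^ 2) := by
  set z := (r : ℂ) * Complex.exp (θ * I)
  set g : ℂ → ℂ := fun w => w * cauchyKernelDerivAverage ψ w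
  have hz : ‖conj z‖ < 1 := by
    simpa [z, abs_of_nonneg hr0] using hr1
  have hg : DifferentiableAt ℂ g (conj z) :=
    differentiableAt_id.mul <| (differentiableOn_cauchyKernelDerivAverage hψ.continuousOn)
      |>.differentiableAt (isOpen_ball.mem_nhds (mem_ball_zero_iff.2 hz))
  have hgconj : DifferentiableAt ℝ (fun u => g (conj u)) z :=
    (hg.restrictScalars ℝ).comp z conjCLE.differentiableAt
  have hQ : Qop ψ = fun u => (1 - u * conj u) * g (conj u) :=
    funext (Qop_eq_mul_cauchyKernelDerivAverage ψ)
  have hrhs :=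
    sq_mul_cauchyKernelDerivAverage (fun ζ => ψ ζ - ψ (Complex.exp (θ * I))) (conj z)
  beta_reduce at hrhs
  rw [hQ, wdz_mul (by fun_prop) hgconj, wdz_one_sub_mul_conj, wdz_comp_conj hg, ← hrhs,
    cauchyKernelDerivAverage_sub_const hψ.continuousOn hz]
  ring
end

section
/- Let ω₂ be a majorant satisfying the Hardy–Littlewood condition and ψ ∈ 𝓛_{ω₂}(𝕋) with seminorm L. Then there is a constant M > 0 such that for all ξ ∈ 𝕋 and 0 ≤ r₂ < r₁ < 1, |Q[ψ](r₁ξ) - Q[ψ](r₂ξ)| ≤ M·L·ω₂(r₁ - r₂). -/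
/-!
On the ray through `ξ`, `Q[ψ](rξ) = (1/2π) ∫ K_r(ξ̄ e^{it}) ψ(e^{it}) dt` with
`K_r(w) = r w (1 - r²) / (1 - r w)²`. The kernel has mean zero, so `ψ(e^{it})` may be replaced by
`ψ(e^{it}) - ψ(ξ)`, which is at most `L ω₂(x)` for the chord `x = |e^{it} - ξ|`. With `λ = 1 - r`,
`|K_r| ≲ λ / (λ² + x²/4)` and `|∂_r K_r| ≲ 1 / (λ² + x²/4)`, and after Jordan's inequality the
Hardy–Littlewood condition bounds `∫ ω₂(x) / (λ² + x²/4) dt` by a multiple of `ω₂(λ) / λ`.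
Put `δ = r₁ - r₂` and `λ = 1 - r₁`. If `δ ≤ λ`, the mean value theorem in `r` gives the bound
`δ ω₂(λ) / λ ≤ ω₂(δ)`, as `ω₂(t) / t` decreases. If `δ > λ`, both terms are estimated separately,
using `ω₂(1 - r₂) ≤ ω₂(2δ) ≤ 2 ω₂(δ)`.
-/

open Complex

open ComplexConjugate

section Kernel

variable {w : ℂ} {r : ℝ}

lemma norm_one_sub_ofReal_mul_sq (hw : ‖w‖ = 1) :
    ‖1 - r * w‖ ^ 2 = (1 - r) ^ 2 + r * ‖1 - w‖ ^ 2 := by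
  have hw2 : normSq w = 1 := by rw [← Complex.sq_norm, hw, one_pow]
  simp only [Complex.sq_norm, normSq_sub, normSq_ofReal, hw2, map_one,
    one_mul, mul_one, map_mul, conj_ofReal]
  simp only [mul_re, ofReal_re, ofReal_im, zero_mul, sub_zero]
  ring

lemma one_sub_le_norm_one_sub_ofReal_mul (hw : ‖w‖ = 1) (hr : 0 ≤ r) :
    1 - r ≤ ‖1 - r * w‖ := by
  simpa [hw, abs_of_nonneg hr] using norm_sub_norm_le (1 : ℂ) (r * w)

lemma one_sub_ofReal_mul_ne_zero (hw : ‖w‖ = 1) (hr0 : 0 ≤ r) (hr1 : r < 1) :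
    1 - r * w ≠ 0 :=
  norm_pos_iff.mp <| (sub_pos.mpr hr1).trans_le (one_sub_le_norm_one_sub_ofReal_mul hw hr0)

/-- The chord `‖1 - w‖ ≤ 2` keeps the second term harmless when `r` is small. -/
lemma sq_add_sq_div_four_le (hw : ‖w‖ = 1) (hr0 : 0 ≤ r) :
    (1 - r) ^ 2 + ‖1 - w‖ ^ 2 / 4 ≤ 4 * ‖1 - r * w‖ ^ 2 := by
  have hx : ‖1 - w‖ ≤ 2 := (norm_sub_le _ _).trans (by rw [norm_one, hw]; norm_num)
  rw [norm_one_sub_ofReal_mul_sq hw]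
  have hx0 := norm_nonneg (1 - w)
  rcases le_or_gt (1 / 16) r with hr | hr
  · nlinarith
  · nlinarith

noncomputable def qKernel (r : ℝ) (w : ℂ) : ℂ :=
  r * w * (1 - r ^ 2 : ℝ) / (1 - r * w) ^ 2

lemma norm_qKernel (hw : ‖w‖ = 1) (hr0 : 0 ≤ r) (hr1 : r ≤ 1) :
    ‖qKernel r w‖ = r * (1 - r ^ 2) / ‖1 - r * w‖ ^ 2 := by
  rw [qKernel, norm_div, norm_mul, norm_mul, norm_pow, hw, norm_real, norm_real,
    Real.norm_of_nonneg hr0, Real.norm_of_nonneg (by nlinarith), mul_one]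

lemma norm_qKernel_le (hw : ‖w‖ = 1) (hr0 : 0 ≤ r) (hr1 : r < 1) :
    ‖qKernel r w‖ ≤ 8 * (1 - r) / ((1 - r) ^ 2 + ‖1 - w‖ ^ 2 / 4) := by
  have hd := sq_add_sq_div_four_le hw hr0
  have hD : 0 < (1 - r) ^ 2 + ‖1 - w‖ ^ 2 / 4 := by have := sub_pos.mpr hr1; positivity
  rw [norm_qKernel hw hr0 hr1.le, div_le_div_iff₀ (by nlinarith) hD]
  have : 0 ≤ r * (1 - r ^ 2) := by nlinarith
  calc r * (1 - r ^ 2) * ((1 - r) ^ 2 + ‖1 - w‖ ^ 2 / 4)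
      ≤ r * (1 - r ^ 2) * (4 * ‖1 - r * w‖ ^ 2) := by gcongr
    _ ≤ 8 * (1 - r) * ‖1 - r * w‖ ^ 2 := by
        have hr : 0 ≤ 2 - r * (1 + r) := by nlinarith
        nlinarith [mul_nonneg (mul_nonneg (sub_nonneg.2 hr1.le) hr) (sq_nonneg ‖1 - r * w‖)]

noncomputable def qKernelDeriv (r : ℝ) (w : ℂ) : ℂ :=
  (1 - 3 * r ^ 2 : ℝ) * w / (1 - r * w) ^ 2 + 2 * w ^ 2 * (r - r ^ 3 : ℝ) / (1 - r * w) ^ 3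

lemma hasDerivAt_qKernel (hw : ‖w‖ = 1) (hr0 : 0 ≤ r) (hr1 : r < 1) :
    HasDerivAt (fun ρ : ℝ => qKernel ρ w) (qKernelDeriv r w) r := by
  have hne := one_sub_ofReal_mul_ne_zero hw hr0 hr1
  have hρ : HasDerivAt (fun ρ : ℝ => (ρ : ℂ)) 1 r := ofRealCLM.hasDerivAt
  have hnum := (hρ.mul_const w).fun_mul ((hρ.fun_pow 2).const_sub 1)
  have hden := ((hρ.mul_const w).const_sub 1).fun_pow 2
  have hq : (fun ρ : ℝ => qKernel ρ w) =
      fun ρ : ℝ => ρ * w * (1 - (ρ : ℂ) ^ 2) / (1 - ρ * w) ^ 2 := by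
    funext ρ; simp [qKernel]
  rw [hq]
  refine (hnum.fun_div hden (pow_ne_zero 2 hne)).congr_deriv ?_
  simp only [qKernelDeriv]; push_cast; field_simp; ring

lemma norm_qKernelDeriv_le (hw : ‖w‖ = 1) (hr0 : 0 ≤ r) (hr1 : r < 1) :
    ‖qKernelDeriv r w‖ ≤ 6 / ‖1 - r * w‖ ^ 2 := by
  set d := ‖1 - r * w‖
  have hd : 1 - r ≤ d := one_sub_le_norm_one_sub_ofReal_mul hw hr0
  have hd0 : 0 < d := (sub_pos.mpr hr1).trans_le hd
  have h1 : |1 - 3 * r ^ 2| ≤ 2 := abs_le.mpr ⟨by nlinarith, by nlinarith⟩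
  have h2 : 2 * |r - r ^ 3| ≤ 4 * d := by
    rw [abs_of_nonneg (by nlinarith)]
    nlinarith [mul_nonneg (sub_nonneg.2 hr1.le) (by nlinarith : 0 ≤ 2 - r * (1 + r))]
  calc ‖qKernelDeriv r w‖ ≤ |1 - 3 * r ^ 2| / d ^ 2 + 2 * |r - r ^ 3| / d ^ 3 := by
        refine (norm_add_le _ _).trans (le_of_eq ?_)
        simp only [norm_div, norm_mul, norm_pow, norm_real, Real.norm_eq_abs, hw, d]
        norm_num
    _ ≤ 2 / d ^ 2 + 4 * d / d ^ 3 := by gcongr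
    _ = 6 / d ^ 2 := by field_simp; ring

lemma norm_qKernel_sub_le (hw : ‖w‖ = 1) {r₁ r₂ : ℝ} (h₂ : 0 ≤ r₂) (h₁₂ : r₂ ≤ r₁) (h₁ : r₁ < 1) :
    ‖qKernel r₁ w - qKernel r₂ w‖ ≤
      24 * (r₁ - r₂) / ((1 - r₁) ^ 2 + ‖1 - w‖ ^ 2 / 4) := by
  have hD : 0 < (1 - r₁) ^ 2 + ‖1 - w‖ ^ 2 / 4 := by have := sub_pos.mpr h₁; positivity
  have hderiv : ∀ ρ ∈ Set.Icc r₂ r₁,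
      ‖qKernelDeriv ρ w‖ ≤ 24 / ((1 - r₁) ^ 2 + ‖1 - w‖ ^ 2 / 4) := by
    rintro ρ ⟨hρ₂, hρ₁⟩
    have hρ0 : 0 ≤ ρ := h₂.trans hρ₂
    have hd : 0 < ‖1 - ρ * w‖ := norm_pos_iff.mpr (one_sub_ofReal_mul_ne_zero hw hρ0 (by linarith))
    refine (norm_qKernelDeriv_le hw hρ0 (by linarith)).trans ?_
    rw [div_le_div_iff₀ (by positivity) hD]
    nlinarith [sq_add_sq_div_four_le hw hρ0]
  have := (convex_Icc r₂ r₁).norm_image_sub_le_of_norm_hasDerivWithin_le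
    (fun ρ hρ => (hasDerivAt_qKernel hw (h₂.trans hρ.1) (hρ.2.trans_lt h₁)).hasDerivWithinAt)
    hderiv (Set.left_mem_Icc.mpr h₁₂) (Set.right_mem_Icc.mpr h₁₂)
  rw [Real.norm_of_nonneg (sub_nonneg.mpr h₁₂)] at this
  rwa [div_mul_eq_mul_div] at this

end Kernel

lemma norm_mul_exp_ofReal_mul_I {u : ℂ} (hu : ‖u‖ = 1) (t : ℝ) : ‖u * exp (t * I)‖ = 1 := by
  rw [norm_mul, hu, norm_exp_ofReal_mul_I, one_mul]

section Integral

variable {u : ℂ} {r : ℝ}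

lemma continuous_qKernel (hu : ‖u‖ = 1) (hr0 : 0 ≤ r) (hr1 : r < 1) :
    Continuous fun t : ℝ => qKernel r (u * exp (t * I)) :=
  Continuous.div (by fun_prop) (by fun_prop) fun t =>
    pow_ne_zero 2 (one_sub_ofReal_mul_ne_zero (norm_mul_exp_ofReal_mul_I hu t) hr0 hr1)

/-- The kernel is the `t`-derivative of the `2π`-periodic function
`-I (1 - r²) / (1 - r u e^{it})`. -/
lemma integral_qKernel_eq_zero (hu : ‖u‖ = 1) (hr0 : 0 ≤ r) (hr1 : r < 1) :
    ∫ t in (0 : ℝ)..2 * Real.pi, qKernel r (u * exp (t * I)) = 0 := by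
  set F : ℝ → ℂ := fun t => -I * (1 - r ^ 2 : ℝ) * (1 - r * (u * exp (t * I)))⁻¹
  have hF : ∀ t : ℝ, HasDerivAt F (qKernel r (u * exp (t * I))) t := by
    intro t
    have hne := one_sub_ofReal_mul_ne_zero (norm_mul_exp_ofReal_mul_I hu t) hr0 hr1
    have he : HasDerivAt (fun s : ℝ => exp (s * I)) (exp (t * I) * I) t := by
      simpa using ((hasDerivAt_id (t : ℂ)).mul_const I).cexp.comp_ofReal
    have := (((he.const_mul u).const_mul (r : ℂ)).const_sub 1).inv hne |>.const_mul
      (-I * (1 - r ^ 2 : ℝ))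
    refine this.congr_deriv ?_
    rw [qKernel]
    linear_combination
      (-r * (u * exp (t * I)) * (1 - r ^ 2 : ℝ) / (1 - r * (u * exp (t * I))) ^ 2) * I_sq
  rw [intervalIntegral.integral_eq_sub_of_hasDerivAt (fun t _ => hF t)
    ((continuous_qKernel hu hr0 hr1).intervalIntegrable _ _)]
  simp only [F, sub_eq_zero]
  congr 3
  simp [exp_mul_I_periodic.eq]

end Integral

section Representation

variable {ψ : ℂ → ℂ} {ξ : ℂ} {r : ℝ}

lemma Qop_ofReal_mul_eq_integral_qKernel (hξ : ‖ξ‖ = 1) (r : ℝ) :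
    Qop ψ (r * ξ) = (1 / (2 * Real.pi)) • ∫ t in (0 : ℝ)..2 * Real.pi,
      qKernel r (conj ξ * exp (t * I)) * ψ (exp (t * I)) := by
  have hrξ : ‖(r : ℂ) * ξ‖ ^ 2 = r ^ 2 := by
    rw [norm_mul, hξ, norm_real, mul_one, Real.norm_eq_abs, sq_abs]
  simp only [Qop, qKernel, hrξ, map_mul, conj_ofReal]
  congr 1
  refine intervalIntegral.integral_congr fun t _ => ?_
  ring

lemma Qop_ofReal_mul_eq (hψ : Continuous fun t : ℝ => ψ (exp (t * I))) (hξ : ‖ξ‖ = 1)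
    (hr0 : 0 ≤ r) (hr1 : r < 1) :
    Qop ψ (r * ξ) = (1 / (2 * Real.pi)) • ∫ t in (0 : ℝ)..2 * Real.pi,
      qKernel r (conj ξ * exp (t * I)) * (ψ (exp (t * I)) - ψ ξ) := by
  have hK := continuous_qKernel ((norm_conj ξ).trans hξ) hr0 hr1
  rw [Qop_ofReal_mul_eq_integral_qKernel hξ]
  simp only [mul_sub]
  rw [intervalIntegral.integral_sub ((hK.fun_mul hψ).intervalIntegrable _ _)
      ((hK.fun_mul continuous_const).intervalIntegrable _ _), intervalIntegral.integral_mul_const,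
    integral_qKernel_eq_zero ((norm_conj ξ).trans hξ) hr0 hr1, zero_mul, sub_zero]

lemma Qop_ofReal_mul_sub_eq (hψ : Continuous fun t : ℝ => ψ (exp (t * I))) (hξ : ‖ξ‖ = 1)
    {r₁ r₂ : ℝ} (h₁0 : 0 ≤ r₁) (h₁ : r₁ < 1) (h₂0 : 0 ≤ r₂) (h₂ : r₂ < 1) :
    Qop ψ (r₁ * ξ) - Qop ψ (r₂ * ξ) = (1 / (2 * Real.pi)) • ∫ t in (0 : ℝ)..2 * Real.pi,
      (qKernel r₁ (conj ξ * exp (t * I)) - qKernel r₂ (conj ξ * exp (t * I))) *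
        (ψ (exp (t * I)) - ψ ξ) := by
  have hξ' : ‖conj ξ‖ = 1 := (norm_conj ξ).trans hξ
  have hψξ : Continuous fun t : ℝ => ψ (exp (t * I)) - ψ ξ := hψ.sub continuous_const
  rw [Qop_ofReal_mul_eq hψ hξ h₁0 h₁, Qop_ofReal_mul_eq hψ hξ h₂0 h₂, ← smul_sub,
    ← intervalIntegral.integral_sub
      (((continuous_qKernel hξ' h₁0 h₁).fun_mul hψξ).intervalIntegrable _ _)
      (((continuous_qKernel hξ' h₂0 h₂).fun_mul hψξ).intervalIntegrable _ _)]
  simp only [sub_mul]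

end Representation

lemma continuous_comp_exp_mul_I {ω : ℝ → ℝ} (hcont : ContinuousOn ω (Set.Ici 0)) (h0 : ω 0 = 0)
    {ψ : ℂ → ℂ} {L : ℝ}
    (hψ : ∀ ξ ζ : ℂ, ‖ξ‖ = 1 → ‖ζ‖ = 1 → ‖ψ ξ - ψ ζ‖ ≤ L * ω ‖ξ - ζ‖) :
    Continuous fun t : ℝ => ψ (exp (t * I)) := by
  refine continuous_iff_continuousAt.mpr fun t₀ => tendsto_iff_norm_sub_tendsto_zero.mpr ?_
  have hbound : Continuous fun t : ℝ => L * ω ‖exp (t * I) - exp (t₀ * I)‖ :=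
    continuous_const.mul <| hcont.comp_continuous (by fun_prop) fun _ => norm_nonneg _
  refine squeeze_zero (fun _ => norm_nonneg _)
    (fun t => hψ _ _ (norm_exp_ofReal_mul_I t) (norm_exp_ofReal_mul_I t₀)) ?_
  simpa [h0] using hbound.tendsto t₀

lemma norm_one_sub_conj_mul {ξ : ℂ} (hξ : ‖ξ‖ = 1) (z : ℂ) : ‖1 - conj ξ * z‖ = ‖z - ξ‖ := by
  have hconj : conj ξ * ξ = 1 := by
    rw [mul_comm, mul_conj, normSq_eq_norm_sq, hξ]; norm_num
  rw [← hconj, ← mul_sub, norm_mul, norm_conj, hξ, one_mul, norm_sub_rev]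

lemma integral_comp_norm_exp_sub {g : ℝ → ℝ} (hg : ContinuousOn g (Set.Ici 0)) {ξ : ℂ}
    (hξ : ‖ξ‖ = 1) :
    ∫ t in (0 : ℝ)..2 * Real.pi, g ‖exp (t * I) - ξ‖ =
      2 * ∫ s in (0 : ℝ)..Real.pi, g (2 * Real.sin (s / 2)) := by
  have hπ := Real.pi_pos
  set θ := arg ξ
  have hθ : exp (θ * I) = ξ := by simpa [hξ] using norm_mul_exp_arg_mul_I ξ
  set h : ℝ → ℝ := fun s => g ‖exp (s * I) - 1‖
  have hh : Continuous h := hg.comp_continuous (by fun_prop) fun _ => norm_nonneg _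
  have hper : Function.Periodic h (2 * Real.pi) := fun s => by
    simp only [h, ofReal_add, ofReal_mul, ofReal_ofNat, add_mul, exp_add, exp_two_pi_mul_I, mul_one]
  have hsymm : ∀ s, h (2 * Real.pi - s) = h s := fun s => by
    simp only [h]
    rw [mul_comm, norm_exp_I_mul_ofReal_sub_one, mul_comm (s : ℂ), norm_exp_I_mul_ofReal_sub_one,
      show (2 * Real.pi - s) / 2 = Real.pi - s / 2 by ring, Real.sin_pi_sub]
  have hshift : ∀ t : ℝ, g ‖exp (t * I) - ξ‖ = h (t - θ) := fun t => by
    have : exp (t * I) - ξ = ξ * (exp ((t - θ : ℝ) * I) - 1) := by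
      rw [← hθ, mul_sub, ← exp_add]; push_cast; ring_nf
    simp only [h, this, norm_mul, hξ, one_mul]
  calc ∫ t in (0 : ℝ)..2 * Real.pi, g ‖exp (t * I) - ξ‖
      = ∫ t in (0 : ℝ)..2 * Real.pi, h t := by
        simp only [hshift, intervalIntegral.integral_comp_sub_right h θ]
        rw [zero_sub, ← neg_add_eq_sub, hper.intervalIntegral_add_eq (-θ) 0, zero_add]
    _ = (∫ s in (0 : ℝ)..Real.pi, h s) + ∫ s in Real.pi..2 * Real.pi, h s :=
        (intervalIntegral.integral_add_adjacent_intervals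
          (hh.intervalIntegrable _ _) (hh.intervalIntegrable _ _)).symm
    _ = 2 * ∫ s in (0 : ℝ)..Real.pi, h s := by
        have := intervalIntegral.integral_comp_sub_left h (2 * Real.pi) (a := 0) (b := Real.pi)
        simp only [hsymm, sub_zero, show 2 * Real.pi - Real.pi = Real.pi by ring] at this
        rw [← this]; ring
    _ = 2 * ∫ s in (0 : ℝ)..Real.pi, g (2 * Real.sin (s / 2)) := by
        congr 1
        refine intervalIntegral.integral_congr fun s hs => ?_
        rw [Set.uIcc_of_le hπ.le] at hs
        simp only [h]
        rw [mul_comm, norm_exp_I_mul_ofReal_sub_one, Real.norm_of_nonneg]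
        exact mul_nonneg two_pos.le
          (Real.sin_nonneg_of_nonneg_of_le_pi (by linarith [hs.1]) (by linarith [hs.2]))

lemma uIcc_subset_Ici_of_le {α : Type*} [LinearOrder α] {a b c : α} (ha : c ≤ a) (hb : c ≤ b) :
    Set.uIcc a b ⊆ Set.Ici c :=
  fun _ hx => le_trans (le_min ha hb) hx.1

def HardyLittlewoodCondition (ω : ℝ → ℝ) (M₀ : ℝ) : Prop :=
  ∀ lam : ℝ, lam ∈ Set.Ioc 0 Real.pi → lam * ∫ t in lam..Real.pi, ω t / t ^ 2 ≤ M₀ * ω lam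

section Majorant

variable {ω : ℝ → ℝ}

lemma mul_le_mul_of_antitoneOn_div (hanti : AntitoneOn (fun t => ω t / t) (Set.Ioi 0))
    {a b : ℝ} (ha : 0 < a) (hab : a ≤ b) : a * ω b ≤ b * ω a := by
  have hb := ha.trans_le hab
  have := hanti ha hb hab
  simp only at this
  rwa [div_le_div_iff₀ hb ha, mul_comm (ω b), mul_comm (ω a)] at this

lemma apply_le_two_mul_apply (hmono : MonotoneOn ω (Set.Ici 0))
    (hanti : AntitoneOn (fun t => ω t / t) (Set.Ioi 0)) {x δ : ℝ} (hx : 0 ≤ x) (hδ : 0 < δ)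
    (hxδ : x ≤ 2 * δ) : ω x ≤ 2 * ω δ := by
  have hdouble := mul_le_mul_of_antitoneOn_div hanti hδ (by linarith : δ ≤ 2 * δ)
  have hle : ω x ≤ ω (2 * δ) := hmono hx (Set.mem_Ici.mpr (by linarith)) hxδ
  nlinarith

/-- Jordan's inequality `s / π ≤ sin (s / 2)` lets the chord `2 sin (s / 2)` be traded
for the arc `s`. -/
lemma div_chord_le (hmono : MonotoneOn ω (Set.Ici 0)) (hnonneg : ∀ t, 0 ≤ t → 0 ≤ ω t)
    {lam s : ℝ} (hlam : 0 < lam) (hs0 : 0 ≤ s) (hsπ : s ≤ Real.pi) :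
    ω (2 * Real.sin (s / 2)) / (lam ^ 2 + (2 * Real.sin (s / 2)) ^ 2 / 4) ≤
      ω s / (lam ^ 2 + s ^ 2 / Real.pi ^ 2) := by
  have hπ := Real.pi_pos
  have hsin0 : 0 ≤ Real.sin (s / 2) :=
    Real.sin_nonneg_of_nonneg_of_le_pi (by linarith) (by linarith)
  have hchord : 2 * Real.sin (s / 2) ≤ s := by linarith [Real.sin_le (by linarith : 0 ≤ s / 2)]
  have hjordan : s / Real.pi ≤ Real.sin (s / 2) := by
    calc s / Real.pi = 2 / Real.pi * (s / 2) := by ring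
      _ ≤ Real.sin (s / 2) := Real.mul_le_sin (by linarith) (by linarith)
  refine div_le_div₀ (hnonneg s hs0) (hmono (by simpa using hsin0) hs0 hchord)
    (by positivity) ?_
  have : (s / Real.pi) ^ 2 ≤ Real.sin (s / 2) ^ 2 := by gcongr
  rw [div_pow] at this
  linarith

lemma continuousOn_div_sq_add_sq_div (hcont : ContinuousOn ω (Set.Ici 0)) {lam κ : ℝ}
    (hlam : 0 < lam) (hκ : 0 ≤ κ) :
    ContinuousOn (fun x => ω x / (lam ^ 2 + x ^ 2 / κ)) (Set.Ici 0) :=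
  hcont.div (by fun_prop) fun x _ => (add_pos_of_pos_of_nonneg (pow_pos hlam 2)
    (div_nonneg (sq_nonneg x) hκ)).ne'

lemma integral_div_sq_add_sq_le (hcont : ContinuousOn ω (Set.Ici 0))
    (hmono : MonotoneOn ω (Set.Ici 0)) (hnonneg : ∀ t, 0 ≤ t → 0 ≤ ω t) {M₀ : ℝ}
    (hHL : HardyLittlewoodCondition ω M₀)
    {lam : ℝ} (hlam : 0 < lam) (hlamπ : lam ≤ Real.pi) :
    ∫ s in (0 : ℝ)..Real.pi, ω s / (lam ^ 2 + s ^ 2 / Real.pi ^ 2) ≤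
      (1 + Real.pi ^ 2 * M₀) * (ω lam / lam) := by
  have hπ := Real.pi_pos
  set f := fun s => ω s / (lam ^ 2 + s ^ 2 / Real.pi ^ 2)
  have hf : ∀ {a b : ℝ}, 0 ≤ a → 0 ≤ b → IntervalIntegrable f MeasureTheory.volume a b :=
    fun ha hb => ((continuousOn_div_sq_add_sq_div hcont hlam (sq_nonneg _)).mono
      (uIcc_subset_Ici_of_le ha hb)).intervalIntegrable
  have hnear : ∫ s in (0 : ℝ)..lam, f s ≤ ω lam / lam := by
    calc ∫ s in (0 : ℝ)..lam, f s ≤ ∫ _ in (0 : ℝ)..lam, ω lam / lam ^ 2 := by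
          refine intervalIntegral.integral_mono_on hlam.le (hf le_rfl hlam.le)
            intervalIntegrable_const fun s hs => ?_
          exact div_le_div₀ (hnonneg lam hlam.le) (hmono hs.1 hlam.le hs.2) (by positivity)
            (le_add_of_nonneg_right (by positivity))
      _ = ω lam / lam := by rw [intervalIntegral.integral_const, smul_eq_mul, sub_zero]; field_simp
  have hfar : ∫ s in lam..Real.pi, f s ≤ Real.pi ^ 2 * M₀ * (ω lam / lam) := by
    have hint : IntervalIntegrable (fun s => ω s / s ^ 2) MeasureTheory.volume lam Real.pi :=
      ((hcont.mono (uIcc_subset_Ici_of_le hlam.le hπ.le)).div (by fun_prop) fun s hs => by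
        rw [Set.uIcc_of_le hlamπ] at hs
        exact pow_ne_zero 2 (hlam.trans_le hs.1).ne').intervalIntegrable
    calc ∫ s in lam..Real.pi, f s ≤ ∫ s in lam..Real.pi, Real.pi ^ 2 * (ω s / s ^ 2) := by
          refine intervalIntegral.integral_mono_on hlamπ (hf hlam.le hπ.le) (hint.const_mul _)
            fun s hs => ?_
          have hs0 := hlam.trans_le hs.1
          rw [mul_div_assoc', div_le_div_iff₀ (by positivity) (by positivity)]
          have := hnonneg s hs0.le
          field_simp
          nlinarith [mul_nonneg this (sq_nonneg lam)]
      _ = Real.pi ^ 2 * ∫ s in lam..Real.pi, ω s / s ^ 2 := intervalIntegral.integral_const_mul _ _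
      _ ≤ Real.pi ^ 2 * (M₀ * ω lam / lam) := by
          gcongr
          rw [le_div_iff₀ hlam, mul_comm]
          exact hHL lam ⟨hlam, hlamπ⟩
      _ = Real.pi ^ 2 * M₀ * (ω lam / lam) := by ring
  rw [← intervalIntegral.integral_add_adjacent_intervals (hf le_rfl hlam.le) (hf hlam.le hπ.le)]
  linarith

lemma norm_smul_integral_le_of_le_chord (hcont : ContinuousOn ω (Set.Ici 0))
    (hmono : MonotoneOn ω (Set.Ici 0)) (hnonneg : ∀ t, 0 ≤ t → 0 ≤ ω t) {M₀ : ℝ}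
    (hHL : HardyLittlewoodCondition ω M₀)
    {ξ : ℂ} (hξ : ‖ξ‖ = 1) {F : ℝ → ℂ} {c lam : ℝ} (hc : 0 ≤ c) (hlam : 0 < lam)
    (hlamπ : lam ≤ Real.pi)
    (hF : ∀ t : ℝ, ‖F t‖ ≤
      c * (ω ‖exp (t * I) - ξ‖ / (lam ^ 2 + ‖exp (t * I) - ξ‖ ^ 2 / 4))) :
    ‖(1 / (2 * Real.pi)) • ∫ t in (0 : ℝ)..2 * Real.pi, F t‖ ≤
      c / Real.pi * ((1 + Real.pi ^ 2 * M₀) * (ω lam / lam)) := by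
  have hπ := Real.pi_pos
  set g := fun x => c * (ω x / (lam ^ 2 + x ^ 2 / 4))
  have hg : ContinuousOn g (Set.Ici 0) :=
    continuousOn_const.mul (continuousOn_div_sq_add_sq_div hcont hlam (by norm_num))
  have hsin : Set.MapsTo (fun s => 2 * Real.sin (s / 2)) (Set.uIcc 0 Real.pi) (Set.Ici 0) :=
    fun s hs => by
      rw [Set.uIcc_of_le hπ.le] at hs
      exact mul_nonneg two_pos.le
        (Real.sin_nonneg_of_nonneg_of_le_pi (by linarith [hs.1]) (by linarith [hs.2]))
  have hF_int : ‖∫ t in (0 : ℝ)..2 * Real.pi, F t‖ ≤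
      ∫ t in (0 : ℝ)..2 * Real.pi, g ‖exp (t * I) - ξ‖ :=
    intervalIntegral.norm_integral_le_of_norm_le (by positivity)
      (Filter.Eventually.of_forall fun t _ => hF t)
      ((hg.comp_continuous (by fun_prop) fun _ => norm_nonneg _).intervalIntegrable _ _)
  have hchord : ∫ s in (0 : ℝ)..Real.pi, g (2 * Real.sin (s / 2)) ≤
      c * ∫ s in (0 : ℝ)..Real.pi, ω s / (lam ^ 2 + s ^ 2 / Real.pi ^ 2) := by
    rw [← intervalIntegral.integral_const_mul]
    refine intervalIntegral.integral_mono_on hπ.le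
      ((hg.comp (by fun_prop) hsin).intervalIntegrable)
      (((continuousOn_div_sq_add_sq_div hcont hlam (sq_nonneg _)).mono
        (uIcc_subset_Ici_of_le le_rfl hπ.le)).intervalIntegrable.const_mul c) fun s hs => ?_
    exact mul_le_mul_of_nonneg_left (div_chord_le hmono hnonneg hlam hs.1 hs.2) hc
  calc ‖(1 / (2 * Real.pi)) • ∫ t in (0 : ℝ)..2 * Real.pi, F t‖
      = 1 / (2 * Real.pi) * ‖∫ t in (0 : ℝ)..2 * Real.pi, F t‖ := by
        rw [norm_smul, Real.norm_of_nonneg (by positivity)]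
    _ ≤ 1 / (2 * Real.pi) * (2 * (c * ((1 + Real.pi ^ 2 * M₀) * (ω lam / lam)))) := by
        rw [integral_comp_norm_exp_sub hg hξ] at hF_int
        have := integral_div_sq_add_sq_le hcont hmono hnonneg hHL hlam hlamπ
        gcongr
        exact hF_int.trans (by gcongr; exact hchord.trans (by gcongr))
    _ = c / Real.pi * ((1 + Real.pi ^ 2 * M₀) * (ω lam / lam)) := by field_simp

end Majorant

section Estimates

variable {ω : ℝ → ℝ} {M₀ : ℝ} {ψ : ℂ → ℂ} {L : ℝ} {ξ : ℂ}

lemma norm_Qop_ofReal_mul_le (hcont : ContinuousOn ω (Set.Ici 0))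
    (hmono : MonotoneOn ω (Set.Ici 0)) (hnonneg : ∀ t, 0 ≤ t → 0 ≤ ω t)
    (hHL : HardyLittlewoodCondition ω M₀)
    (hL : 0 ≤ L) (hψ : ∀ ξ ζ : ℂ, ‖ξ‖ = 1 → ‖ζ‖ = 1 → ‖ψ ξ - ψ ζ‖ ≤ L * ω ‖ξ - ζ‖)
    (hψc : Continuous fun t : ℝ => ψ (exp (t * I))) (hξ : ‖ξ‖ = 1) {r : ℝ} (hr0 : 0 ≤ r)
    (hr1 : r < 1) :
    ‖Qop ψ (r * ξ)‖ ≤ 8 / Real.pi * (1 + Real.pi ^ 2 * M₀) * L * ω (1 - r) := by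
  have hlam : 0 < 1 - r := sub_pos.mpr hr1
  rw [Qop_ofReal_mul_eq hψc hξ hr0 hr1]
  refine (norm_smul_integral_le_of_le_chord hcont hmono hnonneg hHL hξ (c := 8 * (1 - r) * L)
    (by positivity) hlam (by linarith [Real.pi_gt_three]) fun t => ?_).trans_eq (by field_simp)
  have hw := (norm_mul_exp_ofReal_mul_I ((norm_conj ξ).trans hξ) t)
  have hK := norm_qKernel_le hw hr0 hr1
  rw [norm_one_sub_conj_mul hξ] at hK
  rw [norm_mul]
  refine (mul_le_mul hK (hψ _ _ (norm_exp_ofReal_mul_I t) hξ) (norm_nonneg _)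
    (by positivity)).trans_eq ?_
  ring

lemma norm_Qop_ofReal_mul_sub_le (hcont : ContinuousOn ω (Set.Ici 0))
    (hmono : MonotoneOn ω (Set.Ici 0)) (hnonneg : ∀ t, 0 ≤ t → 0 ≤ ω t)
    (hHL : HardyLittlewoodCondition ω M₀)
    (hL : 0 ≤ L) (hψ : ∀ ξ ζ : ℂ, ‖ξ‖ = 1 → ‖ζ‖ = 1 → ‖ψ ξ - ψ ζ‖ ≤ L * ω ‖ξ - ζ‖)
    (hψc : Continuous fun t : ℝ => ψ (exp (t * I))) (hξ : ‖ξ‖ = 1) {r₁ r₂ : ℝ} (h₂0 : 0 ≤ r₂)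
    (h₁₂ : r₂ ≤ r₁) (h₁ : r₁ < 1) :
    ‖Qop ψ (r₁ * ξ) - Qop ψ (r₂ * ξ)‖ ≤
      24 / Real.pi * (1 + Real.pi ^ 2 * M₀) * L * ((r₁ - r₂) * (ω (1 - r₁) / (1 - r₁))) := by
  have hlam : 0 < 1 - r₁ := sub_pos.mpr h₁
  have hδ : 0 ≤ r₁ - r₂ := sub_nonneg.mpr h₁₂
  rw [Qop_ofReal_mul_sub_eq hψc hξ (h₂0.trans h₁₂) h₁ h₂0 (h₁₂.trans_lt h₁)]
  refine (norm_smul_integral_le_of_le_chord hcont hmono hnonneg hHL hξ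
    (c := 24 * (r₁ - r₂) * L) (by positivity) hlam (by linarith [Real.pi_gt_three])
    fun t => ?_).trans_eq (by ring)
  have hw := (norm_mul_exp_ofReal_mul_I ((norm_conj ξ).trans hξ) t)
  have hK := norm_qKernel_sub_le hw h₂0 h₁₂ h₁
  rw [norm_one_sub_conj_mul hξ] at hK
  rw [norm_mul]
  refine (mul_le_mul hK (hψ _ _ (norm_exp_ofReal_mul_I t) hξ) (norm_nonneg _)
    (by positivity)).trans_eq ?_
  ring

end Estimates

/-- Lemma 2.4: radial Lipschitz estimate for `Q[ψ]`:
`|Q[ψ](r₁ξ) - Q[ψ](r₂ξ)| ≤ M L ω₂(r₁ - r₂)` for `ξ ∈ 𝕋` and `0 ≤ r₂ < r₁ < 1`. -/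
theorem Qop_radial_lipschitz (ω₂ : ℝ → ℝ)
    (hcont : ContinuousOn ω₂ (Set.Ici 0))
    (hmono : MonotoneOn ω₂ (Set.Ici 0))
    (hnonneg : ∀ t, 0 ≤ t → 0 ≤ ω₂ t)
    (h0 : ω₂ 0 = 0)
    (hanti : AntitoneOn (fun t => ω₂ t / t) (Set.Ioi 0))
    (M₀ : ℝ) (hM₀ : 0 < M₀)
    (hHL : ∀ lam : ℝ, lam ∈ Set.Ioc 0 Real.pi →
      lam * ∫ t in lam..Real.pi, ω₂ t / t ^ 2 ≤ M₀ * ω₂ lam)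
    (ψ : ℂ → ℂ) (L : ℝ) (hL : 0 ≤ L)
    (hψ : ∀ ξ ζ : ℂ, ‖ξ‖ = 1 → ‖ζ‖ = 1 →
      ‖ψ ξ - ψ ζ‖ ≤ L * ω₂ (‖ξ - ζ‖))
    :
    ∃ M : ℝ, 0 < M ∧ ∀ (ξ : ℂ), ‖ξ‖ = 1 → ∀ r₁ r₂ : ℝ,
      0 ≤ r₂ → r₂ < r₁ → r₁ < 1 →
      ‖Qop ψ ((r₁ : ℂ) * ξ) - Qop ψ ((r₂ : ℂ) * ξ)‖ ≤ M * L * ω₂ (r₁ - r₂) := by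
  refine ⟨24 / Real.pi * (1 + Real.pi ^ 2 * M₀), by positivity, fun ξ hξ r₁ r₂ h₂0 h₁₂ h₁ => ?_⟩
  have hψc := continuous_comp_exp_mul_I hcont h0 hψ
  have hδ : 0 < r₁ - r₂ := sub_pos.mpr h₁₂
  have hM : 0 ≤ 24 / Real.pi * (1 + Real.pi ^ 2 * M₀) * L := by positivity
  rcases le_or_gt (r₁ - r₂) (1 - r₁) with hnear | hfar
  · refine (norm_Qop_ofReal_mul_sub_le hcont hmono hnonneg hHL hL hψ hψc hξ h₂0 h₁₂.le h₁).trans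
      (mul_le_mul_of_nonneg_left ?_ hM)
    rw [mul_div_assoc', div_le_iff₀ (sub_pos.mpr h₁), mul_comm (ω₂ _)]
    exact mul_le_mul_of_antitoneOn_div hanti hδ hnear
  · have h₁' : ω₂ (1 - r₁) ≤ ω₂ (r₁ - r₂) := hmono (sub_pos.mpr h₁).le hδ.le hfar.le
    have h₂' : ω₂ (1 - r₂) ≤ 2 * ω₂ (r₁ - r₂) :=
      apply_le_two_mul_apply hmono hanti (by linarith) hδ (by linarith)
    calc ‖Qop ψ (r₁ * ξ) - Qop ψ (r₂ * ξ)‖ ≤ ‖Qop ψ (r₁ * ξ)‖ + ‖Qop ψ (r₂ * ξ)‖ := norm_sub_le _ _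
      _ ≤ 8 / Real.pi * (1 + Real.pi ^ 2 * M₀) * L * ω₂ (1 - r₁) +
          8 / Real.pi * (1 + Real.pi ^ 2 * M₀) * L * ω₂ (1 - r₂) :=
        add_le_add (norm_Qop_ofReal_mul_le hcont hmono hnonneg hHL hL hψ hψc hξ (by linarith) h₁)
          (norm_Qop_ofReal_mul_le hcont hmono hnonneg hHL hL hψ hψc hξ h₂0 (by linarith))
      _ ≤ 8 / Real.pi * (1 + Real.pi ^ 2 * M₀) * L * ω₂ (r₁ - r₂) +
          8 / Real.pi * (1 + Real.pi ^ 2 * M₀) * L * (2 * ω₂ (r₁ - r₂)) := by gcongr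
      _ = 24 / Real.pi * (1 + Real.pi ^ 2 * M₀) * L * ω₂ (r₁ - r₂) := by ring
end
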